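/- arXiv:2004.14706 — 3 statements merged into one kernel-verified Lean document; each statement's English description precedes it below -/
import Mathlib

section
/- For all a, b, c in the real unit interval [0,1], max( min( (c ⇒ a) ⇒ a , a ⇒ b ) , ((c ⇒ a) ⇒ a) ⇒ (b ⇒ a) ) = 1. (This is the semantic content of the Gödel-logic theorem (((χ → φ) → φ) ∧ (φ → ψ)) ∨ ((((χ → φ) → φ)) → (ψ → φ)), Lemma 2.2 of the paper, via completeness of Gödel logic over [0,1].) -/
open unitInterval

instance : Fact ((0:ℝ) ≤ 1) := ⟨zero_le_one⟩

noncomputable instance : CompleteLattice unitInterval := Set.Icc.completeLattice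

/-- Gödel implication on the unit interval. -/
noncomputable def gimp (a b : unitInterval) : unitInterval := if a ≤ b then 1 else b

infixr:60 " ⇒ " => gimp

/-- Gödel negation on the unit interval. -/
noncomputable def gneg (a : unitInterval) : unitInterval := a ⇒ 0

theorem godel_splitting (a b c : unitInterval) :
    ((((c ⇒ a) ⇒ a) ⊓ (a ⇒ b)) ⊔ ((((c ⇒ a) ⇒ a)) ⇒ (b ⇒ a))) = 1 := by
  have hone : ∀ x : unitInterval, x ≤ 1 := fun x => le_one'
  have hsup1 : ∀ x : unitInterval, x ⊔ (1:unitInterval) = 1 := fun x => sup_eq_right.2 (hone x)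
  have hsup1' : ∀ x : unitInterval, (1:unitInterval) ⊔ x = 1 := fun x => sup_eq_left.2 (hone x)
  by_cases hba : b ≤ a
  · have : (b ⇒ a) = 1 := if_pos hba
    rw [this]
    have : (((c ⇒ a) ⇒ a) ⇒ (1:unitInterval)) = 1 := if_pos (hone _)
    rw [this, hsup1]
  · -- ¬ b ≤ a, so a ≤ b (linear order) and a ≠ b
    have hab : a ≤ b := le_of_not_ge hba
    have h1 : (a ⇒ b) = 1 := if_pos hab
    have h2 : (b ⇒ a) = a := if_neg hba
    rw [h1, h2]
    by_cases hca : (c ⇒ a) ≤ a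
    · have hu : ((c ⇒ a) ⇒ a) = 1 := if_pos hca
      rw [hu]
      rw [min_self, hsup1']
    · have hu : ((c ⇒ a) ⇒ a) = a := if_neg hca
      rw [hu]
      have : (a ⇒ a) = 1 := if_pos le_rfl
      rw [this, hsup1]
end

section
/- Let W be a type, S a subset of W, and f, g : W → [0,1]. Then ⨅_{w ∈ S} (f w ⊔ g w) ≤ (⨅_{w ∈ S} f w) ⊔ (⨆_{w ∈ S} g w). (This is soundness of the axiom (Cr): □(φ ∨ ψ) → (□φ ∨ ◇ψ) at any world of any crisp Gödel-Kripke model.) -/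
open unitInterval

infixr:60 " ⇒ " => gimp

theorem soundness_Cr {W : Type*} (S : Set W) (f g : W → unitInterval) :
    (⨅ w ∈ S, (f w ⊔ g w)) ≤ (⨅ w ∈ S, f w) ⊔ (⨆ w ∈ S, g w) := by
  by_cases h : (⨅ w ∈ S, (f w ⊔ g w)) ≤ ⨆ w ∈ S, g w
  · exact h.trans le_sup_right
  · refine le_sup_of_le_left ?_
    refine le_iInf₂ fun w hw => ?_
    have h1 : (⨅ w ∈ S, (f w ⊔ g w)) ≤ f w ⊔ g w := biInf_le _ hw
    rcases le_total (g w) (f w) with hle | hle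
    · simpa [sup_eq_left.mpr hle] using h1
    · exact absurd ((h1.trans (sup_le (hle.trans le_rfl) le_rfl)).trans
        (le_biSup _ hw)) h
end

section
/- Let W be a type, S a subset of W, and f : W → [0,1]. Then ⨆_{w ∈ S} ¬¬(f w) ≤ ¬¬(⨆_{w ∈ S} f w), where ¬a = a ⇒ 0 is Gödel negation. (This is soundness of the axiom (Z_◇): ◇¬¬φ → ¬¬◇φ at any world of any crisp Gödel-Kripke model; this axiom is specific to crisp accessibility relations.) -/
open unitInterval

infixr:60 " ⇒ " => gimp

theorem soundness_Z_diamond {W : Type*} (S : Set W) (f : W → unitInterval) :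
    (⨆ w ∈ S, gneg (gneg (f w))) ≤ gneg (gneg (⨆ w ∈ S, f w)) := by
  apply iSup_le; intro w; apply iSup_le; intro hw
  by_cases h : f w ≤ 0
  · simp [gneg, gimp, h]
  · have hs : ¬ (⨆ w ∈ S, f w) ≤ 0 := fun hle =>
      h (le_trans (le_biSup f hw) hle)
    simp [gneg, gimp, h, hs]
end
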